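/- arXiv:1003.1220 — 4 statements merged into one kernel-verified Lean document; each statement's English description precedes it below -/
import Mathlib

section
/- In E⁴₂, no C∞-special timelike Frenet curve is a Bertrand curve. Precisely: let C (data c, t, n₁, n₂, n₃, k₁, k₂, k₃) and C̄ (data c̄, t̄, n̄₁, n̄₂, n̄₃, k̄₁, k̄₂, k̄₃) be C∞-special timelike Frenet curves in E⁴₂, let φ : ℝ → ℝ be smooth with φ'(s) ≠ 0 for all s, and let α : ℝ → ℝ be a smooth function such that c̄(φ(s)) = c(s) + α(s)·n₁(s) and n̄₁(φ(s)) is a scalar multiple of n₁(s) for all s. Then α(s) = 0 for all s, and hence c̄(φ(s)) = c(s) for all s; in particular C̄ does not give a Bertrand mate distinct from C. -/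
noncomputable section

/-- The indefinite metric of semi-Euclidean space `E⁴₂`:
`g(v,w) = -v₁w₁ - v₂w₂ + v₃w₃ + v₄w₄`. -/
def g4 (v w : Fin 4 → ℝ) : ℝ :=
  -(v 0 * w 0) - v 1 * w 1 + v 2 * w 2 + v 3 * w 3

/-- The semi-Euclidean norm `‖v‖ = √|g(v,v)|` in `E⁴₂`. -/
def nrm4 (v : Fin 4 → ℝ) : ℝ := Real.sqrt |g4 v v|

/-- A `C^∞`-special timelike Frenet curve in `E⁴₂`: a unit-speed timelike curve
with Frenet frame `t, n₁, n₂, n₃` (with `t, n₁` timelike and `n₂, n₃` spacelike)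
and nowhere-vanishing curvatures `k₁, k₂, k₃` satisfying the Frenet equations
`t' = -k₁·n₁`, `n₁' = k₁·t + k₂·n₂`, `n₂' = k₂·n₁ + k₃·n₃`, `n₃' = -k₃·n₂`. -/
structure TimelikeFrenetE42 where
  c : ℝ → Fin 4 → ℝ
  t : ℝ → Fin 4 → ℝ
  n1 : ℝ → Fin 4 → ℝ
  n2 : ℝ → Fin 4 → ℝ
  n3 : ℝ → Fin 4 → ℝ
  k1 : ℝ → ℝ
  k2 : ℝ → ℝ
  k3 : ℝ → ℝ
  smooth_c : ContDiff ℝ (⊤ : ℕ∞) c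
  smooth_t : ContDiff ℝ (⊤ : ℕ∞) t
  smooth_n1 : ContDiff ℝ (⊤ : ℕ∞) n1
  smooth_n2 : ContDiff ℝ (⊤ : ℕ∞) n2
  smooth_n3 : ContDiff ℝ (⊤ : ℕ∞) n3
  smooth_k1 : ContDiff ℝ (⊤ : ℕ∞) k1
  smooth_k2 : ContDiff ℝ (⊤ : ℕ∞) k2
  smooth_k3 : ContDiff ℝ (⊤ : ℕ∞) k3
  deriv_c : ∀ s, HasDerivAt c (t s) s
  unit_t : ∀ s, g4 (t s) (t s) = -1
  unit_n1 : ∀ s, g4 (n1 s) (n1 s) = -1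
  unit_n2 : ∀ s, g4 (n2 s) (n2 s) = 1
  unit_n3 : ∀ s, g4 (n3 s) (n3 s) = 1
  orth_t_n1 : ∀ s, g4 (t s) (n1 s) = 0
  orth_t_n2 : ∀ s, g4 (t s) (n2 s) = 0
  orth_t_n3 : ∀ s, g4 (t s) (n3 s) = 0
  orth_n1_n2 : ∀ s, g4 (n1 s) (n2 s) = 0
  orth_n1_n3 : ∀ s, g4 (n1 s) (n3 s) = 0
  orth_n2_n3 : ∀ s, g4 (n2 s) (n3 s) = 0
  k1_ne : ∀ s, k1 s ≠ 0
  k2_ne : ∀ s, k2 s ≠ 0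
  k3_ne : ∀ s, k3 s ≠ 0
  frenet_t : ∀ s, HasDerivAt t (-(k1 s) • n1 s) s
  frenet_n1 : ∀ s, HasDerivAt n1 (k1 s • t s + k2 s • n2 s) s
  frenet_n2 : ∀ s, HasDerivAt n2 (k2 s • n1 s + k3 s • n3 s) s
  frenet_n3 : ∀ s, HasDerivAt n3 (-(k3 s) • n2 s) s

lemma g4_smul_left (a : ℝ) (v w : Fin 4 → ℝ) : g4 (a • v) w = a * g4 v w := by
  simp [g4]; ring

lemma g4_add_left (u v w : Fin 4 → ℝ) : g4 (u + v) w = g4 u w + g4 v w := by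
  simp [g4]; ring

lemma hasDerivAt_g4 {u v : ℝ → Fin 4 → ℝ} {u' v' : Fin 4 → ℝ} {s : ℝ}
    (hu : HasDerivAt u u' s) (hv : HasDerivAt v v' s) :
    HasDerivAt (fun x => g4 (u x) (v x)) (g4 u' (v s) + g4 (u s) v') s := by
  have hui := hasDerivAt_pi.mp hu
  have hvi := hasDerivAt_pi.mp hv
  have key : HasDerivAt
      (fun x => -(u x 0 * v x 0) - u x 1 * v x 1 + u x 2 * v x 2 + u x 3 * v x 3)
      (-(u' 0 * v s 0 + u s 0 * v' 0) - (u' 1 * v s 1 + u s 1 * v' 1)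
        + (u' 2 * v s 2 + u s 2 * v' 2) + (u' 3 * v s 3 + u s 3 * v' 3)) s :=
    ((((hui 0).mul (hvi 0)).neg.sub ((hui 1).mul (hvi 1))).add
      ((hui 2).mul (hvi 2))).add ((hui 3).mul (hvi 3))
  simp only [g4]
  convert key using 1
  ring

/-- In `E⁴₂`, no `C^∞`-special timelike Frenet curve is a Bertrand curve: if
`c̄(φ(s)) = c(s) + α(s)·n₁(s)` with `n̄₁(φ(s))` a scalar multiple of `n₁(s)` for all
`s`, then `α ≡ 0` and hence `c̄(φ(s)) = c(s)` for all `s`; in particular `C̄` does not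
give a Bertrand mate distinct from `C`. -/
theorem no_timelike_bertrand_E42
    (C Cb : TimelikeFrenetE42) (φ α : ℝ → ℝ)
    (hφ : ContDiff ℝ (⊤ : ℕ∞) φ) (hφ' : ∀ s, deriv φ s ≠ 0)
    (hα : ContDiff ℝ (⊤ : ℕ∞) α)
    (hpos : ∀ s, Cb.c (φ s) = C.c s + α s • C.n1 s)
    (hnor : ∀ s, ∃ lam : ℝ, Cb.n1 (φ s) = lam • C.n1 s) :
    (∀ s, α s = 0) ∧ (∀ s, Cb.c (φ s) = C.c s) := by
  have hφd : ∀ s, HasDerivAt φ (deriv φ s) s :=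
    fun s => ((hφ.differentiable (by simp)) s).hasDerivAt
  have hαd : ∀ s, HasDerivAt α (deriv α s) s :=
    fun s => ((hα.differentiable (by simp)) s).hasDerivAt
  -- derivative equality from hpos
  have hEq : ∀ s, deriv φ s • Cb.t (φ s)
      = C.t s + (α s • (C.k1 s • C.t s + C.k2 s • C.n2 s) + deriv α s • C.n1 s) := by
    intro s
    have h1 : HasDerivAt (fun x => Cb.c (φ x)) (deriv φ s • Cb.t (φ s)) s :=
      (Cb.deriv_c (φ s)).scomp s (hφd s)
    have h2 : HasDerivAt (fun x => C.c x + α x • C.n1 x)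
        (C.t s + (α s • (C.k1 s • C.t s + C.k2 s • C.n2 s) + deriv α s • C.n1 s)) s :=
      (C.deriv_c s).add ((hαd s).smul (C.frenet_n1 s))
    have hfe : (fun x => Cb.c (φ x)) = fun x => C.c x + α x • C.n1 x := funext hpos
    rw [hfe] at h1
    exact h1.unique h2
  -- components of t̄∘φ
  have e2 : ∀ s, deriv φ s * g4 (Cb.t (φ s)) (C.n2 s) = α s * C.k2 s := by
    intro s
    have h := congrArg (fun v => g4 v (C.n2 s)) (hEq s)
    simp only [g4_smul_left, g4_add_left] at h
    rw [C.orth_t_n2 s, C.orth_n1_n2 s, C.unit_n2 s] at h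
    linarith [h]
  have e3 : ∀ s, g4 (Cb.t (φ s)) (C.n3 s) = 0 := by
    intro s
    have h := congrArg (fun v => g4 v (C.n3 s)) (hEq s)
    simp only [g4_smul_left, g4_add_left] at h
    rw [C.orth_t_n3 s, C.orth_n1_n3 s, C.orth_n2_n3 s] at h
    have h' : deriv φ s * g4 (Cb.t (φ s)) (C.n3 s) = 0 := by linarith [h]
    exact (mul_eq_zero.mp h').resolve_left (hφ' s)
  -- the function f(s) = g4(t̄(φ s), n₃ s) is identically 0
  have hfzero : (fun s => g4 (Cb.t (φ s)) (C.n3 s)) = fun _ => (0 : ℝ) := funext e3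
  have halpha : ∀ s, α s = 0 := by
    intro s
    obtain ⟨lam, hlam⟩ := hnor s
    have hf : HasDerivAt (fun x => g4 (Cb.t (φ x)) (C.n3 x))
        (g4 (deriv φ s • (-(Cb.k1 (φ s)) • Cb.n1 (φ s))) (C.n3 s)
          + g4 (Cb.t (φ s)) (-(C.k3 s) • C.n2 s)) s :=
      hasDerivAt_g4 ((Cb.frenet_t (φ s)).scomp s (hφd s)) (C.frenet_n3 s)
    rw [hfzero] at hf
    have hz := hf.unique (hasDerivAt_const s (0 : ℝ))
    rw [hlam] at hz
    have hn13 : g4 (C.n2 s) (C.n1 s) = 0 := by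
      have := C.orth_n1_n2 s; simp [g4] at this ⊢; linarith
    have hn1n3 : g4 (C.n1 s) (C.n3 s) = 0 := C.orth_n1_n3 s
    have hR : g4 (Cb.t (φ s)) (-(C.k3 s) • C.n2 s) = -(C.k3 s) * g4 (Cb.t (φ s)) (C.n2 s) := by
      simp [g4]; ring
    rw [g4_smul_left, g4_smul_left, g4_smul_left, hn1n3, hR] at hz
    have hz' : C.k3 s * g4 (Cb.t (φ s)) (C.n2 s) = 0 := by linarith [hz]
    have h20 : g4 (Cb.t (φ s)) (C.n2 s) = 0 :=
      (mul_eq_zero.mp hz').resolve_left (C.k3_ne s)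
    have := e2 s
    rw [h20, mul_zero] at this
    have := (mul_eq_zero.mp this.symm).resolve_right (C.k2_ne s)
    exact this
  refine ⟨halpha, fun s => ?_⟩
  rw [hpos s, halpha s, zero_smul, add_zero]
end
end

section
/- Let C (data c, t, n₁, n₂, n₃, k₁, k₂, k₃) and C̄ (data c̄, t̄, n̄₁, n̄₂, n̄₃, k̄₁, k̄₂, k̄₃) form a timelike (1,3)-Bertrand pair in E⁴₂ via the map φ and smooth functions α, β with c̄(φ(s)) = c(s) + α(s)·n₁(s) + β(s)·n₃(s). Then α'(s) = 0 and β'(s) = 0 for all s, i.e. α and β are constant functions. -/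
noncomputable section

lemma g4_add_left_s6 (x y z : Fin 4 → ℝ) : g4 (x + y) z = g4 x z + g4 y z := by
  simp [g4, Pi.add_apply]; ring

lemma g4_smul_left_s6 (r : ℝ) (x z : Fin 4 → ℝ) : g4 (r • x) z = r * g4 x z := by
  simp [g4, Pi.smul_apply, smul_eq_mul]; ring

lemma g4_comm (x y : Fin 4 → ℝ) : g4 x y = g4 y x := by
  simp [g4]; ring

/-- If `C` and `C̄` form a timelike `(1,3)`-Bertrand pair in `E⁴₂` via `φ` and smooth
functions `α, β` (i.e. `c̄(φ(s)) = c(s) + α(s)·n₁(s) + β(s)·n₃(s)` and the plane spanned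
by `n̄₁(φ(s)), n̄₃(φ(s))` coincides with the plane spanned by `n₁(s), n₃(s)`), then
`α' = 0` and `β' = 0`, i.e. `α` and `β` are constant functions. -/
theorem bertrand13_E42_alpha_beta_const
    (C Cb : TimelikeFrenetE42) (φ α β : ℝ → ℝ)
    (hφ : ContDiff ℝ (⊤ : ℕ∞) φ) (hφ' : ∀ s, deriv φ s ≠ 0)
    (hα : ContDiff ℝ (⊤ : ℕ∞) α) (hβ : ContDiff ℝ (⊤ : ℕ∞) β)
    (hpos : ∀ s, Cb.c (φ s) = C.c s + α s • C.n1 s + β s • C.n3 s)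
    (hspan : ∀ s, Submodule.span ℝ ({Cb.n1 (φ s), Cb.n3 (φ s)} : Set (Fin 4 → ℝ)) =
      Submodule.span ℝ ({C.n1 s, C.n3 s} : Set (Fin 4 → ℝ))) :
    (∀ s, deriv α s = 0) ∧ (∀ s, deriv β s = 0) ∧
    (∀ s₁ s₂, α s₁ = α s₂ ∧ β s₁ = β s₂) := by
  have key : ∀ s, deriv α s = 0 ∧ deriv β s = 0 := by
    intro s
    have hφd : HasDerivAt φ (deriv φ s) s := (hφ.differentiable (by norm_num) s).hasDerivAt
    have hαd : HasDerivAt α (deriv α s) s := (hα.differentiable (by norm_num) s).hasDerivAt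
    have hβd : HasDerivAt β (deriv β s) s := (hβ.differentiable (by norm_num) s).hasDerivAt
    have hL : HasDerivAt (fun u => Cb.c (φ u)) (deriv φ s • Cb.t (φ s)) s :=
      (Cb.deriv_c (φ s)).scomp s hφd
    have hR : HasDerivAt (fun u => C.c u + α u • C.n1 u + β u • C.n3 u)
        (C.t s + (α s • (C.k1 s • C.t s + C.k2 s • C.n2 s) + deriv α s • C.n1 s)
          + (β s • (-(C.k3 s) • C.n2 s) + deriv β s • C.n3 s)) s :=
      ((C.deriv_c s).add (hαd.smul (C.frenet_n1 s))).add (hβd.smul (C.frenet_n3 s))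
    have hfun : (fun u => Cb.c (φ u)) =ᶠ[nhds s]
        (fun u => C.c u + α u • C.n1 u + β u • C.n3 u) :=
      Filter.Eventually.of_forall fun u => hpos u
    have hL' : HasDerivAt (fun u => C.c u + α u • C.n1 u + β u • C.n3 u)
        (deriv φ s • Cb.t (φ s)) s := hL.congr_of_eventuallyEq hfun.symm
    have hEq : deriv φ s • Cb.t (φ s) =
        C.t s + (α s • (C.k1 s • C.t s + C.k2 s • C.n2 s) + deriv α s • C.n1 s)
          + (β s • (-(C.k3 s) • C.n2 s) + deriv β s • C.n3 s) := hL'.unique hR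
    -- t̄(φ s) is g4-orthogonal to n1 s and n3 s
    have horth : ∀ v : Fin 4 → ℝ, v ∈ Submodule.span ℝ ({C.n1 s, C.n3 s} : Set (Fin 4 → ℝ)) →
        g4 (Cb.t (φ s)) v = 0 := by
      intro v hv
      rw [← hspan s] at hv
      obtain ⟨a, b, hab⟩ := Submodule.mem_span_pair.mp hv
      rw [← hab, g4_comm, g4_add_left_s6, g4_smul_left_s6, g4_smul_left_s6,
        g4_comm (Cb.n1 _), g4_comm (Cb.n3 _), Cb.orth_t_n1, Cb.orth_t_n3]
      ring
    have h1 : g4 (Cb.t (φ s)) (C.n1 s) = 0 :=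
      horth _ (Submodule.subset_span (by simp))
    have h3 : g4 (Cb.t (φ s)) (C.n3 s) = 0 :=
      horth _ (Submodule.subset_span (by simp))
    have h21 : g4 (C.n2 s) (C.n1 s) = 0 := by rw [g4_comm]; exact C.orth_n1_n2 s
    have h23 : g4 (C.n2 s) (C.n3 s) = 0 := C.orth_n2_n3 s
    have h13 : g4 (C.n1 s) (C.n3 s) = 0 := C.orth_n1_n3 s
    constructor
    · have := congrArg (fun v => g4 v (C.n1 s)) hEq
      simp only [g4_add_left_s6, g4_smul_left_s6, h1, h21, C.unit_n1, C.orth_t_n1,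
        g4_comm (C.n3 s) (C.n1 s), h13] at this
      linarith
    · have := congrArg (fun v => g4 v (C.n3 s)) hEq
      simp only [g4_add_left_s6, g4_smul_left_s6, h3, h23, C.unit_n3, C.orth_t_n3,
        h13] at this
      linarith
  refine ⟨fun s => (key s).1, fun s => (key s).2, fun s₁ s₂ => ⟨?_, ?_⟩⟩
  · exact is_const_of_deriv_eq_zero (hα.differentiable (by norm_num)) (fun s => (key s).1) s₁ s₂
  · exact is_const_of_deriv_eq_zero (hβ.differentiable (by norm_num)) (fun s => (key s).2) s₁ s₂
end
end

section
/- Let C (data c, t, n₁, n₂, n₃, k₁, k₂, k₃) be a C∞-special timelike Frenet curve in E⁴₂ and suppose there exist real constants α, β, γ with γ² > 1 such that α·k₂(s) - β·k₃(s) ≠ 0 and γ·(α·k₂(s) - β·k₃(s)) - α·k₁(s) = 1 for all s. Define c̄(s) = c(s) + α·n₁(s) + β·n₃(s). Then for all s: c̄'(s) = (α·k₂(s) - β·k₃(s))·(γ·t(s) + n₂(s)) and g(c̄'(s), c̄'(s)) = -(γ² - 1)·(α·k₂(s) - β·k₃(s))² < 0; in particular c̄ is a regular timelike curve and its speed is ‖c̄'(s)‖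 = √(γ² - 1)·|α·k₂(s) - β·k₃(s)|, where ‖v‖ = √|g(v,v)|. -/
noncomputable section

/-!
By the Frenet equations `c̄' = (1 + α k₁) t + (α k₂ - β k₃) n₂`, and the hypothesis
`γ (α k₂ - β k₃) - α k₁ = 1` turns the coefficient of `t` into `γ (α k₂ - β k₃)`.
Since `t` is a timelike and `n₂` a spacelike unit vector, orthogonal to each other,
`g(γ t + n₂, γ t + n₂) = 1 - γ²`, which is negative because `γ² > 1`.
-/

theorem g4_smul_smul_add_self {t n : Fin 4 → ℝ} (ht : g4 t t = -1) (hn : g4 n n = 1)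
    (htn : g4 t n = 0) (m γ : ℝ) :
    g4 (m • (γ • t + n)) (m • (γ • t + n)) = -((γ ^ 2 - 1) * m ^ 2) := by
  simp only [g4, Pi.add_apply, Pi.smul_apply, smul_eq_mul] at *
  linear_combination (m ^ 2 * γ ^ 2) * ht + (2 * m ^ 2 * γ) * htn + m ^ 2 * hn

theorem ne_zero_of_g4_self_ne_zero {v : Fin 4 → ℝ} (hv : g4 v v ≠ 0) : v ≠ 0 := by
  rintro rfl
  simp [g4] at hv

theorem nrm4_eq_of_g4_self_eq_neg {v : Fin 4 → ℝ} {a m : ℝ} (ha : 0 ≤ a)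
    (hv : g4 v v = -(a * m ^ 2)) : nrm4 v = Real.sqrt a * |m| := by
  rw [nrm4, hv, abs_neg, abs_of_nonneg (by positivity), Real.sqrt_mul ha,
    Real.sqrt_sq_eq_abs]

namespace TimelikeFrenetE42

theorem hasDerivAt_add_smul_n1_add_smul_n3 (C : TimelikeFrenetE42) (α β s : ℝ) :
    HasDerivAt (fun u => C.c u + α • C.n1 u + β • C.n3 u)
      ((1 + α * C.k1 s) • C.t s + (α * C.k2 s - β * C.k3 s) • C.n2 s) s := by
  refine (((C.deriv_c s).add ((C.frenet_n1 s).const_smul α)).add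
    ((C.frenet_n3 s).const_smul β)).congr_deriv ?_
  ext i
  simp only [Pi.add_apply, Pi.smul_apply, smul_eq_mul]
  ring

end TimelikeFrenetE42

/-- For a `C^∞`-special timelike Frenet curve `C` in `E⁴₂` and constants `α, β, γ` with
`γ² > 1`, `α·k₂ - β·k₃ ≠ 0` and `γ·(α·k₂ - β·k₃) - α·k₁ = 1` everywhere, the curve
`c̄ = c + α·n₁ + β·n₃` satisfies `c̄'(s) = (α·k₂(s) - β·k₃(s))·(γ·t(s) + n₂(s))` and
`g(c̄', c̄') = -(γ² - 1)·(α·k₂ - β·k₃)² < 0`; in particular `c̄` is a regular timelike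
curve with speed `‖c̄'(s)‖ = √(γ² - 1)·|α·k₂(s) - β·k₃(s)|`. -/
theorem bertrand13_E42_mate_regular_timelike
    (C : TimelikeFrenetE42) (α β γ : ℝ) (hγ2 : γ ^ 2 > 1)
    (h1 : ∀ s, α * C.k2 s - β * C.k3 s ≠ 0)
    (h2 : ∀ s, γ * (α * C.k2 s - β * C.k3 s) - α * C.k1 s = 1) :
    ∀ s,
      HasDerivAt (fun u => C.c u + α • C.n1 u + β • C.n3 u)
        ((α * C.k2 s - β * C.k3 s) • (γ • C.t s + C.n2 s)) s ∧
      g4 ((α * C.k2 s - β * C.k3 s) • (γ • C.t s + C.n2 s))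
          ((α * C.k2 s - β * C.k3 s) • (γ • C.t s + C.n2 s)) =
        -((γ ^ 2 - 1) * (α * C.k2 s - β * C.k3 s) ^ 2) ∧
      g4 ((α * C.k2 s - β * C.k3 s) • (γ • C.t s + C.n2 s))
          ((α * C.k2 s - β * C.k3 s) • (γ • C.t s + C.n2 s)) < 0 ∧
      (α * C.k2 s - β * C.k3 s) • (γ • C.t s + C.n2 s) ≠ 0 ∧
      nrm4 ((α * C.k2 s - β * C.k3 s) • (γ • C.t s + C.n2 s)) =
        Real.sqrt (γ ^ 2 - 1) * |α * C.k2 s - β * C.k3 s| := by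
  intro s
  set m := α * C.k2 s - β * C.k3 s
  have hderiv : HasDerivAt (fun u => C.c u + α • C.n1 u + β • C.n3 u)
      (m • (γ • C.t s + C.n2 s)) s := by
    have htangent : 1 + α * C.k1 s = γ * m := by linear_combination -(h2 s)
    convert C.hasDerivAt_add_smul_n1_add_smul_n3 α β s using 1
    rw [htangent, smul_add, smul_smul, mul_comm]
  have hg := g4_smul_smul_add_self (C.unit_t s) (C.unit_n2 s) (C.orth_t_n2 s) m γ
  have hneg : g4 (m • (γ • C.t s + C.n2 s)) (m • (γ • C.t s + C.n2 s)) < 0 := by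
    rw [hg, neg_lt_zero]
    exact mul_pos (by linarith) (sq_pos_of_ne_zero (h1 s))
  exact ⟨hderiv, hg, hneg, ne_zero_of_g4_self_ne_zero hneg.ne,
    nrm4_eq_of_g4_self_eq_neg (by linarith) hg⟩
end
end

section
/- Let C (data c, t, n₁, n₂, n₃, k₁, k₂, k₃) be a C∞-special timelike Frenet curve in E⁴₂ with k₁(s) > 0, k₂(s) ≠ 0, k₃(s) > 0 for all s, and suppose there exist real constants α, β, γ, δ with γ² > 1 and δ² > 1 such that for all s: α·k₂(s) - β·k₃(s) ≠ 0, γ·(α·k₂(s) - β·k₃(s)) - α·k₁(s) = 1, and δ·k₃(s) = -γ·k₁(s) + k₂(s). Define c̄ = c + α·n₁ + β·n₃, φ'(s) = √(γ² - 1)·|α·k₂(s) - β·k₃(s)| (the speed of c̄), and the unit tangent t̄(s) = c̄'(s)/φ'(s). Then t̄(s) = ε·(γ² - 1)^{-1/2}·(γ·t(s) + n₂(s)), where ε is the sign of α·k₂(s) - β·k₃(s), and the first curvature of c̄ with respect to its arclength satisfies ‖t̄'(s)‖/φ'(s) = √((γ·k₁(s) - k₂(s))² - k₃(s)²)/(φ'(s)·√(γ²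 - 1)) = √(δ² - 1)·k₃(s)/(φ'(s)·√(γ² - 1)) > 0, where ‖v‖ = √|g(v,v)|. -/
noncomputable section

/-- The candidate `(1,3)`-Bertrand mate `c̄ = c + α·n₁ + β·n₃`. -/
def cbar (C : TimelikeFrenetE42) (α β : ℝ) : ℝ → Fin 4 → ℝ :=
  fun s => C.c s + α • C.n1 s + β • C.n3 s

/-- The speed `φ'(s) = √(γ² - 1)·|α·k₂(s) - β·k₃(s)|` of `c̄`. -/
def phip (C : TimelikeFrenetE42) (α β γ : ℝ) : ℝ → ℝ :=
  fun s => Real.sqrt (γ ^ 2 - 1) * |α * C.k2 s - β * C.k3 s|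

/-- The unit tangent `t̄(s) = c̄'(s)/φ'(s)` of `c̄`. -/
def tbar (C : TimelikeFrenetE42) (α β γ : ℝ) : ℝ → Fin 4 → ℝ :=
  fun s => (phip C α β γ s)⁻¹ • deriv (cbar C α β) s

/-!
Under `γ (α k₂ - β k₃) - α k₁ = 1` the Frenet equations give
`c̄' = (α k₂ - β k₃)(γ t + n₂)`, and `γ t + n₂` has `g`-length `√(γ² - 1)`, so normalising gives `t̄`.
Since `t̄` is a constant multiple of `γ t + n₂`, its derivative is that multiple of
`(k₂ - γ k₁) n₁ + k₃ n₃`, whose `g`-norm is `√((γ k₁ - k₂)² - k₃²)`; the relation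
`δ k₃ = k₂ - γ k₁` turns this radicand into `(δ² - 1) k₃²`.
-/

open Real

theorem Real.inv_abs_mul_self {x : ℝ} (hx : x ≠ 0) : |x|⁻¹ * x = Real.sign x := by
  rcases hx.lt_or_gt with h | h
  · rw [abs_of_neg h, Real.sign_of_neg h]
    field_simp
  · rw [abs_of_pos h, Real.sign_of_pos h]
    field_simp

theorem Real.abs_sign_of_ne_zero {x : ℝ} (hx : x ≠ 0) : |Real.sign x| = 1 := by
  rcases Real.sign_apply_eq_of_ne_zero x hx with h | h <;> simp [h]

theorem g4_smul_self (a : ℝ) (v : Fin 4 → ℝ) : g4 (a • v) (a • v) = a ^ 2 * g4 v v := by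
  simp only [g4, Pi.smul_apply, smul_eq_mul]
  ring

theorem nrm4_smul (a : ℝ) (v : Fin 4 → ℝ) : nrm4 (a • v) = |a| * nrm4 v := by
  rw [nrm4, nrm4, g4_smul_self, abs_mul, abs_of_nonneg (sq_nonneg a), sqrt_mul (sq_nonneg a),
    sqrt_sq_eq_abs]

theorem g4_smul_add_smul_self {u w : Fin 4 → ℝ} (hu : g4 u u = -1) (hw : g4 w w = 1)
    (huw : g4 u w = 0) (a b : ℝ) :
    g4 (a • u + b • w) (a • u + b • w) = b ^ 2 - a ^ 2 := by
  simp only [g4, Pi.add_apply, Pi.smul_apply, smul_eq_mul] at *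
  linear_combination a ^ 2 * hu + 2 * a * b * huw + b ^ 2 * hw

namespace TimelikeFrenetE42

variable (C : TimelikeFrenetE42) {α β γ : ℝ}

theorem hasDerivAt_cbar {s : ℝ} (h : γ * (α * C.k2 s - β * C.k3 s) - α * C.k1 s = 1) :
    HasDerivAt (cbar C α β) ((α * C.k2 s - β * C.k3 s) • (γ • C.t s + C.n2 s)) s := by
  refine (((C.deriv_c s).add ((C.frenet_n1 s).const_smul α)).add
    ((C.frenet_n3 s).const_smul β)).congr_deriv ?_
  ext i
  simp only [Pi.add_apply, Pi.smul_apply, smul_eq_mul]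
  linear_combination -(C.t s i) * h

theorem tbar_eq {s : ℝ} (h1 : α * C.k2 s - β * C.k3 s ≠ 0)
    (h2 : γ * (α * C.k2 s - β * C.k3 s) - α * C.k1 s = 1) :
    tbar C α β γ s =
      (Real.sign (α * C.k2 s - β * C.k3 s) * (√(γ ^ 2 - 1))⁻¹) • (γ • C.t s + C.n2 s) := by
  rw [tbar, (C.hasDerivAt_cbar h2).deriv, smul_smul, phip, mul_inv, mul_assoc,
    Real.inv_abs_mul_self h1, mul_comm]

theorem hasDerivAt_smul_tangent_add_n2 (κ : ℝ) (s : ℝ) :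
    HasDerivAt (fun s => κ • (γ • C.t s + C.n2 s))
      (κ • ((C.k2 s - γ * C.k1 s) • C.n1 s + C.k3 s • C.n3 s)) s := by
  refine ((((C.frenet_t s).const_smul γ).add (C.frenet_n2 s)).const_smul κ).congr_deriv ?_
  module

theorem nrm4_n1_n3_combination (a b : ℝ) (s : ℝ) :
    nrm4 (a • C.n1 s + b • C.n3 s) = √|b ^ 2 - a ^ 2| := by
  rw [nrm4, g4_smul_add_smul_self (C.unit_n1 s) (C.unit_n3 s) (C.orth_n1_n3 s)]

theorem phip_pos {s : ℝ} (hγ : 1 < γ ^ 2) (h1 : α * C.k2 s - β * C.k3 s ≠ 0) :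
    0 < phip C α β γ s :=
  mul_pos (sqrt_pos.mpr (by linarith)) (abs_pos.mpr h1)

end TimelikeFrenetE42

theorem bertrand13_E42_mate_tangent_and_first_curvature_general
    (C : TimelikeFrenetE42)
    (hk3 : ∀ s, 0 < C.k3 s)
    (α β γ δ ε : ℝ) (hγ2 : γ ^ 2 > 1) (hδ2 : δ ^ 2 > 1)
    (h1 : ∀ s, α * C.k2 s - β * C.k3 s ≠ 0)
    (h2 : ∀ s, γ * (α * C.k2 s - β * C.k3 s) - α * C.k1 s = 1)
    (h3 : ∀ s, δ * C.k3 s = -(γ * C.k1 s) + C.k2 s)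
    (hε : ∀ s, ε = Real.sign (α * C.k2 s - β * C.k3 s)) :
    (∀ s, tbar C α β γ s =
      (ε * (Real.sqrt (γ ^ 2 - 1))⁻¹) • (γ • C.t s + C.n2 s)) ∧
    (∀ s,
      nrm4 (deriv (tbar C α β γ) s) / phip C α β γ s =
        Real.sqrt ((γ * C.k1 s - C.k2 s) ^ 2 - C.k3 s ^ 2) /
          (phip C α β γ s * Real.sqrt (γ ^ 2 - 1)) ∧
      nrm4 (deriv (tbar C α β γ) s) / phip C α β γ s =
        Real.sqrt (δ ^ 2 - 1) * C.k3 s / (phip C α β γ s * Real.sqrt (γ ^ 2 - 1)) ∧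
      0 < nrm4 (deriv (tbar C α β γ) s) / phip C α β γ s) := by
  have htbar : ∀ s, tbar C α β γ s = (ε * (√(γ ^ 2 - 1))⁻¹) • (γ • C.t s + C.n2 s) := fun s => by
    rw [hε s, C.tbar_eq (h1 s) (h2 s)]
  refine ⟨htbar, fun s => ?_⟩
  have hradicand : (γ * C.k1 s - C.k2 s) ^ 2 - C.k3 s ^ 2 = (√(δ ^ 2 - 1) * C.k3 s) ^ 2 := by
    rw [mul_pow, sq_sqrt (by linarith)]
    linear_combination -(C.k2 s - γ * C.k1 s + δ * C.k3 s) * h3 s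
  have hnorm : nrm4 (deriv (tbar C α β γ) s) =
      (√(γ ^ 2 - 1))⁻¹ * √((γ * C.k1 s - C.k2 s) ^ 2 - C.k3 s ^ 2) := by
    rw [funext htbar, (C.hasDerivAt_smul_tangent_add_n2 _ s).deriv, nrm4_smul,
      C.nrm4_n1_n3_combination, abs_mul, hε s, Real.abs_sign_of_ne_zero (h1 s), one_mul,
      abs_inv, abs_of_nonneg (sqrt_nonneg _), abs_sub_comm, ← neg_sub (γ * C.k1 s), neg_sq,
      hradicand, abs_of_nonneg (sq_nonneg _)]
  have hcurv : nrm4 (deriv (tbar C α β γ) s) / phip C α β γ s =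
      √((γ * C.k1 s - C.k2 s) ^ 2 - C.k3 s ^ 2) / (phip C α β γ s * √(γ ^ 2 - 1)) := by
    rw [hnorm]
    field_simp
  have hsqrt : √((γ * C.k1 s - C.k2 s) ^ 2 - C.k3 s ^ 2) = √(δ ^ 2 - 1) * C.k3 s := by
    rw [hradicand, sqrt_sq (mul_nonneg (sqrt_nonneg _) (hk3 s).le)]
  refine ⟨hcurv, hcurv.trans (by rw [hsqrt]), ?_⟩
  rw [hcurv, hsqrt]
  have hδ : 0 < √(δ ^ 2 - 1) := sqrt_pos.mpr (by linarith)
  have hγ : 0 < √(γ ^ 2 - 1) := sqrt_pos.mpr (by linarith)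
  exact div_pos (mul_pos hδ (hk3 s)) (mul_pos (C.phip_pos hγ2 (h1 s)) hγ)

/-- With the hypotheses of the sufficiency construction, the unit tangent of
`c̄ = c + α·n₁ + β·n₃` is `t̄ = ε·(γ² - 1)^{-1/2}·(γ·t + n₂)` (`ε` the sign of
`α·k₂ - β·k₃`), and the first curvature of `c̄` with respect to its arclength satisfies
`‖t̄'(s)‖/φ'(s) = √((γ·k₁ - k₂)² - k₃²)/(φ'·√(γ² - 1)) = √(δ² - 1)·k₃/(φ'·√(γ² - 1)) > 0`. -/
theorem bertrand13_E42_mate_tangent_and_first_curvature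
    (C : TimelikeFrenetE42)
    (hk1 : ∀ s, 0 < C.k1 s) (hk3 : ∀ s, 0 < C.k3 s)
    (α β γ δ ε : ℝ) (hγ2 : γ ^ 2 > 1) (hδ2 : δ ^ 2 > 1)
    (h1 : ∀ s, α * C.k2 s - β * C.k3 s ≠ 0)
    (h2 : ∀ s, γ * (α * C.k2 s - β * C.k3 s) - α * C.k1 s = 1)
    (h3 : ∀ s, δ * C.k3 s = -(γ * C.k1 s) + C.k2 s)
    (hε : ∀ s, ε = Real.sign (α * C.k2 s - β * C.k3 s)) :
    (∀ s, tbar C α β γ s =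
      (ε * (Real.sqrt (γ ^ 2 - 1))⁻¹) • (γ • C.t s + C.n2 s)) ∧
    (∀ s,
      nrm4 (deriv (tbar C α β γ) s) / phip C α β γ s =
        Real.sqrt ((γ * C.k1 s - C.k2 s) ^ 2 - C.k3 s ^ 2) /
          (phip C α β γ s * Real.sqrt (γ ^ 2 - 1)) ∧
      nrm4 (deriv (tbar C α β γ) s) / phip C α β γ s =
        Real.sqrt (δ ^ 2 - 1) * C.k3 s / (phip C α β γ s * Real.sqrt (γ ^ 2 - 1)) ∧
      0 < nrm4 (deriv (tbar C α β γ) s) / phip C α β γ s) :=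
  bertrand13_E42_mate_tangent_and_first_curvature_general C hk3 α β γ δ ε hγ2 hδ2 h1 h2 h3 hε
end
end
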